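/- There is a computable (many-one) reduction from satisfiability of closed prenex SO₂ formulas to satisfiability of closed quantified bit-vector formulas: the translation φ ↦ φ^BV is a computable function from closed prenex SO₂ formulas to closed quantified bit-vector formulas such that for every closed prenex SO₂ formula φ, φ is satisfiable if and only if φ^BV is satisfiable. -/

import Mathlib

/-! The computable many-one reduction `φ ↦ φ^BV` from satisfiability of closed
prenex second-order Boolean (SO₂) formulas to satisfiability of closed
quantified bit-vector formulas. -/

/-- Quantifier-free SO₂ formulas (the matrix). -/
inductive SO2QF (F : Type) (ar : F → ℕ) : Type
  | and : SO2QF F ar → SO2QF F ar → SO2QF F ar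
  | not : SO2QF F ar → SO2QF F ar
  | app : (f : F) → (Fin (ar f) → SO2QF F ar) → SO2QF F ar

/-- Valuation of a quantifier-free SO₂ formula under an interpretation. -/
def SO2QF.eval {F : Type} {ar : F → ℕ}
    (I : (f : F) → (Fin (ar f) → Bool) → Bool) : SO2QF F ar → Bool
  | .and φ ψ => φ.eval I && ψ.eval I
  | .not φ => ! φ.eval I
  | .app f args => I f (fun i => (args i).eval I)

/-- Prenex SO₂ formulas: a quantifier prefix over a quantifier-free matrix. -/
inductive SO2Prenex (F : Type) (ar : F → ℕ) : Type
  | matrix : SO2QF F ar → SO2Prenex F ar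
  | ex : F → SO2Prenex F ar → SO2Prenex F ar
  | all : F → SO2Prenex F ar → SO2Prenex F ar

/-- Valuation of a prenex SO₂ formula: `∃` is the maximum and `∀` the minimum
of the valuations over all Boolean functions of the appropriate arity. -/
def SO2Prenex.eval {F : Type} {ar : F → ℕ} [DecidableEq F] :
    SO2Prenex F ar → ((f : F) → (Fin (ar f) → Bool) → Bool) → Bool
  | .matrix ψ, I => ψ.eval I
  | .ex f φ, I =>
      decide (∃ G : (Fin (ar f) → Bool) → Bool, φ.eval (Function.update I f G) = true)
  | .all f φ, I =>
      decide (∀ G : (Fin (ar f) → Bool) → Bool, φ.eval (Function.update I f G) = true)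

/-- The function symbols occurring in a quantifier-free SO₂ formula. -/
def SO2QF.symbols {F : Type} {ar : F → ℕ} : SO2QF F ar → Set F
  | .and φ ψ => φ.symbols ∪ ψ.symbols
  | .not φ => φ.symbols
  | .app f args => insert f (⋃ i, (args i).symbols)

/-- `φ.ClosedIn B`: every symbol of the matrix is bound by the prefix or in
`B`; a prenex formula is closed when it is closed in `∅`. -/
def SO2Prenex.ClosedIn {F : Type} {ar : F → ℕ} : SO2Prenex F ar → Set F → Prop
  | .matrix ψ, B => ψ.symbols ⊆ B
  | .ex f φ, B => φ.ClosedIn (insert f B)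
  | .all f φ, B => φ.ClosedIn (insert f B)

/-- Bit-vector terms over variables `v : V` of widths `w v`: variables,
bitwise and `&`, bitwise negation `~`, zero constants `0^k`, concatenation `·`
(left argument most significant), generalized indexing `t[s]`, and a cast
along an equality of widths. -/
inductive BVTerm (V : Type) (w : V → ℕ) : ℕ → Type
  | var : (v : V) → BVTerm V w (w v)
  | band : {m : ℕ} → BVTerm V w m → BVTerm V w m → BVTerm V w m
  | bnot : {m : ℕ} → BVTerm V w m → BVTerm V w m
  | zero : (k : ℕ) → BVTerm V w k
  | append : {m k : ℕ} → BVTerm V w m → BVTerm V w k → BVTerm V w (m + k)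
  | index : {m : ℕ} → BVTerm V w m → BVTerm V w m → BVTerm V w 1
  | cast : {m k : ℕ} → m = k → BVTerm V w m → BVTerm V w k

/-- Evaluation of a bit-vector term under an assignment `σ`; the generalized
indexing `t[s]` evaluates to the least significant bit of the logical
right-shift of `t` by the numeric value of `s`. -/
def BVTerm.eval {V : Type} {w : V → ℕ} (σ : (v : V) → BitVec (w v)) :
    {m : ℕ} → BVTerm V w m → BitVec m
  | _, .var v => σ v
  | _, .band t₁ t₂ => t₁.eval σ &&& t₂.eval σ
  | _, .bnot t => ~~~ (t.eval σ)
  | _, .zero _ => 0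
  | _, .append t₁ t₂ => t₁.eval σ ++ t₂.eval σ
  | _, .index t s => BitVec.ofBool ((t.eval σ >>> (s.eval σ).toNat).getLsbD 0)
  | _, .cast h t => BitVec.cast h (t.eval σ)

/-- Quantified bit-vector formulas in prenex form over variables `v : V` of
widths `w v`: a prefix of bit-vector quantifiers over the atomic matrix
`t = 1^{[1]}` for a width-1 term `t`. -/
inductive BVPrenex (V : Type) (w : V → ℕ) : Type
  | eqOne : BVTerm V w 1 → BVPrenex V w
  | ex : V → BVPrenex V w → BVPrenex V w
  | all : V → BVPrenex V w → BVPrenex V w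

/-- Recursive evaluation of a quantified bit-vector formula under an
assignment `σ`: quantifiers range over all bit-vector values of the
appropriate widths. -/
def BVPrenex.Holds {V : Type} {w : V → ℕ} [DecidableEq V] :
    BVPrenex V w → ((v : V) → BitVec (w v)) → Prop
  | .eqOne t, σ => t.eval σ = (1 : BitVec 1)
  | .ex v φ, σ => ∃ x : BitVec (w v), φ.Holds (Function.update σ v x)
  | .all v φ, σ => ∀ x : BitVec (w v), φ.Holds (Function.update σ v x)

/-- The translation `ψ ↦ ψ^BV` of the matrix: `(ρ₁ ∧ ρ₂)^BV = ρ₁^BV & ρ₂^BV`,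
`(¬ρ)^BV = ~ρ^BV`, `f()^BV = x_f` for a proposition `f`, and
`f(ρ_{n-1},…,ρ_0)^BV = x_f[0^{2^n−n} · ρ_{n-1}^BV · … · ρ_0^BV]` for a proper
function symbol `f` of arity `n`, where `x_f` has width `2^(ar f)` and the
chain `ρ_{n-1}^BV · … · ρ_0^BV` is built by `chainBV`. -/
def chainBV {V : Type} {w : V → ℕ} :
    {n : ℕ} → (Fin n → BVTerm V w 1) → BVTerm V w n
  | 0, _ => .zero 0
  | n + 1, f =>
      .cast (Nat.add_comm 1 n)
        (.append (f ⟨n, n.lt_succ_self⟩) (chainBV (fun i => f i.castSucc)))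

def transQF {F : Type} {ar : F → ℕ} :
    SO2QF F ar → BVTerm F (fun f => 2 ^ ar f) 1
  | .and ρ₁ ρ₂ => .band (transQF ρ₁) (transQF ρ₂)
  | .not ρ => .bnot (transQF ρ)
  | .app f args =>
      if h : ar f = 0 then
        .cast (by rw [h, pow_zero]) (.var f)
      else
        .index (.var f)
          (.cast (Nat.sub_add_cancel (Nat.le_of_lt ((Nat.lt_two_pow_self (n := ar f)))))
            (.append (.zero (2 ^ ar f - ar f))
              (chainBV (fun i => transQF (args i)))))

/-- The translation `φ ↦ φ^BV`: each SO₂ quantifier `Q f` is replaced by the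
bit-vector quantifier `Q x_f` over bit-vectors of width `2^(ar f)`, and the
matrix `ψ` becomes the assertion `ψ^BV = 1`.  This is a `def`, hence a
computable (many-one) reduction function. -/
def transPrenex {F : Type} {ar : F → ℕ} :
    SO2Prenex F ar → BVPrenex F (fun f => 2 ^ ar f)
  | .matrix ψ => .eqOne (transQF ψ)
  | .ex f φ => .ex f (transPrenex φ)
  | .all f φ => .all f (transPrenex φ)

/-- The encoding of a tuple of Booleans as a natural number. -/
def encNat : {n : ℕ} → (Fin n → Bool) → ℕ
  | 0, _ => 0
  | n + 1, b =>
      (cond (b ⟨n, n.lt_succ_self⟩) 1 0) <<< n ||| encNat (fun i => b i.castSucc)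

lemma encNat_lt : ∀ {n : ℕ} (b : Fin n → Bool), encNat b < 2 ^ n
  | 0, _ => Nat.one_pos
  | n + 1, b => by
    apply Nat.or_lt_two_pow
    · calc (cond (b ⟨n, n.lt_succ_self⟩) 1 0) <<< n
          = (cond (b ⟨n, n.lt_succ_self⟩) 1 0) * 2 ^ n := by
            rw [Nat.shiftLeft_eq]
      _ ≤ 1 * 2 ^ n := by
            apply Nat.mul_le_mul_right; cases b ⟨n, n.lt_succ_self⟩ <;> simp
      _ < 2 ^ (n + 1) := by rw [one_mul]; exact Nat.pow_lt_pow_succ one_lt_two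
    · exact lt_trans (encNat_lt _) (Nat.pow_lt_pow_succ one_lt_two)

lemma testBit_encNat : ∀ {n : ℕ} (b : Fin n → Bool) (i : Fin n),
    (encNat b).testBit i = b i
  | n + 1, b, i => by
    rw [encNat, Nat.testBit_or, Nat.testBit_shiftLeft]
    rcases Nat.lt_succ_iff_lt_or_eq.mp i.isLt with h | h
    · have h1 : decide ((i : ℕ) ≥ n) = false := by simp; omega
      rw [h1, Bool.false_and, Bool.false_or]
      have := testBit_encNat (fun j => b j.castSucc) ⟨i, h⟩
      simpa [Fin.castSucc, Fin.ext_iff] using this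
    · have h1 : decide ((i : ℕ) ≥ n) = true := by simp [h]
      have h2 : (encNat (fun j => b j.castSucc)).testBit i = false := by
        rw [h]; exact Nat.testBit_lt_two_pow (encNat_lt _)
      rw [h1, h2, Bool.true_and, Bool.or_false, h, Nat.sub_self]
      have : i = ⟨n, n.lt_succ_self⟩ := Fin.ext h
      rw [this]; cases b ⟨n, n.lt_succ_self⟩ <;> rfl

/-- For any Boolean function there is a bit-vector with the corresponding bits. -/
lemma exists_bv {n : ℕ} (G : (Fin n → Bool) → Bool) :
    ∃ x : BitVec (2 ^ n), ∀ b : Fin n → Bool, x.getLsbD (encNat b) = G b := by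
  refine ⟨BitVec.ofNat (2 ^ n)
    (encNat (fun j : Fin (2 ^ n) => G (fun i => ((j : ℕ).testBit i)))), fun b => ?_⟩
  have hlt : encNat b < 2 ^ n := encNat_lt b
  rw [BitVec.getLsbD, BitVec.toNat_ofNat,
    Nat.mod_eq_of_lt (encNat_lt _)]
  rw [testBit_encNat (fun j : Fin (2 ^ n) => G (fun i => ((j : ℕ).testBit i))) ⟨encNat b, hlt⟩]
  congr 1
  funext i
  exact testBit_encNat b i

lemma bitvec_one_eq : ∀ x : BitVec 1, x = BitVec.ofBool (x.getLsbD 0) := by decide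

lemma chainBV_toNat {V : Type} {w : V → ℕ} (σ : (v : V) → BitVec (w v)) :
    ∀ {n : ℕ} (ts : Fin n → BVTerm V w 1) (b : Fin n → Bool),
      (∀ i, (ts i).eval σ = BitVec.ofBool (b i)) →
      ((chainBV ts).eval σ).toNat = encNat b
  | 0, ts, b, _ => rfl
  | n + 1, ts, b, h => by
    show ((BVTerm.cast (Nat.add_comm 1 n)
      (.append (ts ⟨n, n.lt_succ_self⟩) (chainBV (fun i => ts i.castSucc)))).eval σ).toNat
      = encNat b
    rw [BVTerm.eval, BVTerm.eval, BitVec.toNat_cast, BitVec.toNat_append,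
      chainBV_toNat σ (fun i => ts i.castSucc) (fun i => b i.castSucc)
        (fun i => h i.castSucc), h ⟨n, n.lt_succ_self⟩]
    have hrfl : encNat b = (cond (b ⟨n, n.lt_succ_self⟩) 1 0) <<< n |||
        encNat (fun i => b i.castSucc) := rfl
    rw [hrfl]
    cases b ⟨n, n.lt_succ_self⟩ <;> rfl

lemma encNat_zero {n : ℕ} (h : n = 0) (b : Fin n → Bool) : encNat b = 0 := by
  subst h; rfl

lemma transQF_eval {F : Type} {ar : F → ℕ}
    (σ : (f : F) → BitVec (2 ^ ar f)) (I : (f : F) → (Fin (ar f) → Bool) → Bool)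
    (S : Set F)
    (hc : ∀ f ∈ S, ∀ b : Fin (ar f) → Bool, (σ f).getLsbD (encNat b) = I f b) :
    ∀ ψ : SO2QF F ar, ψ.symbols ⊆ S →
      (transQF ψ).eval σ = BitVec.ofBool (ψ.eval I)
  | .and φ ψ, hS => by
    have h1 := transQF_eval σ I S hc φ (fun x hx => hS (Or.inl hx))
    have h2 := transQF_eval σ I S hc ψ (fun x hx => hS (Or.inr hx))
    rw [transQF, SO2QF.eval, BVTerm.eval, h1, h2]
    cases φ.eval I <;> cases ψ.eval I <;> decide
  | .not φ, hS => by
    have h1 := transQF_eval σ I S hc φ hS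
    rw [transQF, SO2QF.eval, BVTerm.eval, h1]
    cases φ.eval I <;> decide
  | .app f args, hS => by
    have hfS : f ∈ S := hS (Set.mem_insert f _)
    have hargs : ∀ i, (args i).symbols ⊆ S := fun i x hx =>
      hS (Set.mem_insert_iff.mpr (Or.inr (Set.mem_iUnion.mpr ⟨i, hx⟩)))
    have hIH : ∀ i, (transQF (args i)).eval σ = BitVec.ofBool ((args i).eval I) :=
      fun i => transQF_eval σ I S hc (args i) (hargs i)
    rw [transQF]
    by_cases h : ar f = 0
    · rw [dif_pos h]
      have key := hc f hfS (fun i => (args i).eval I)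
      rw [encNat_zero h] at key
      rw [SO2QF.eval, ← key, BVTerm.eval, BVTerm.eval]
      rw [bitvec_one_eq (BitVec.cast _ (σ f)), BitVec.getLsbD_cast]
    · rw [dif_neg h]
      rw [BVTerm.eval, BVTerm.eval]
      have hsn : ((BVTerm.cast (Nat.sub_add_cancel (Nat.le_of_lt (Nat.lt_two_pow_self (n := ar f))))
          (.append (.zero (2 ^ ar f - ar f))
            (chainBV (fun i => transQF (args i))))).eval σ).toNat
          = encNat (fun i => (args i).eval I) := by
        rw [BVTerm.eval, BVTerm.eval, BitVec.toNat_cast, BitVec.toNat_append,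
          chainBV_toNat σ _ (fun i => (args i).eval I) hIH]
        simp [BVTerm.eval]
      rw [hsn, BitVec.getLsbD_ushiftRight, Nat.add_zero]
      rw [hc f hfS (fun i => (args i).eval I)]
      rfl

lemma transPrenex_holds {F : Type} {ar : F → ℕ} [DecidableEq F] :
    ∀ (φ : SO2Prenex F ar) (B : Set F) (I : (f : F) → (Fin (ar f) → Bool) → Bool)
      (σ : (f : F) → BitVec (2 ^ ar f)),
      φ.ClosedIn B →
      (∀ f ∈ B, ∀ b : Fin (ar f) → Bool, (σ f).getLsbD (encNat b) = I f b) →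
      (φ.eval I = true ↔ (transPrenex φ).Holds σ)
  | .matrix ψ, B, I, σ, hcl, hc => by
    rw [SO2Prenex.eval, transPrenex]
    show _ ↔ (transQF ψ).eval σ = 1
    rw [transQF_eval σ I B hc ψ hcl]
    cases ψ.eval I <;> decide
  | .ex f φ, B, I, σ, hcl, hc => by
    rw [SO2Prenex.eval, transPrenex, decide_eq_true_iff]
    show _ ↔ ∃ x : BitVec (2 ^ ar f), (transPrenex φ).Holds (Function.update σ f x)
    constructor
    · rintro ⟨G, hG⟩
      obtain ⟨x, hx⟩ := exists_bv G
      refine ⟨x, (transPrenex_holds φ (insert f B) (Function.update I f G)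
        (Function.update σ f x) hcl ?_).mp hG⟩
      intro g hg b
      by_cases hgf : g = f
      · subst hgf; simp only [Function.update_self]; exact hx b
      · rw [Function.update_of_ne hgf, Function.update_of_ne hgf]
        exact hc g (hg.resolve_left hgf) b
    · rintro ⟨x, hx⟩
      refine ⟨fun b => x.getLsbD (encNat b),
        (transPrenex_holds φ (insert f B) _ (Function.update σ f x) hcl ?_).mpr hx⟩
      intro g hg b
      by_cases hgf : g = f
      · subst hgf; simp only [Function.update_self]
      · rw [Function.update_of_ne hgf, Function.update_of_ne hgf]
        exact hc g (hg.resolve_left hgf) b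
  | .all f φ, B, I, σ, hcl, hc => by
    rw [SO2Prenex.eval, transPrenex, decide_eq_true_iff]
    show _ ↔ ∀ x : BitVec (2 ^ ar f), (transPrenex φ).Holds (Function.update σ f x)
    constructor
    · intro hG x
      refine (transPrenex_holds φ (insert f B) (Function.update I f
        (fun b => x.getLsbD (encNat b))) (Function.update σ f x) hcl ?_).mp (hG _)
      intro g hg b
      by_cases hgf : g = f
      · subst hgf; simp only [Function.update_self]
      · rw [Function.update_of_ne hgf, Function.update_of_ne hgf]
        exact hc g (hg.resolve_left hgf) b
    · intro hx G
      obtain ⟨x, hxG⟩ := exists_bv G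
      refine (transPrenex_holds φ (insert f B) (Function.update I f G)
        (Function.update σ f x) hcl ?_).mpr (hx x)
      intro g hg b
      by_cases hgf : g = f
      · subst hgf; simp only [Function.update_self]; exact hxG b
      · rw [Function.update_of_ne hgf, Function.update_of_ne hgf]
        exact hc g (hg.resolve_left hgf) b

/-- The computable translation `φ ↦ φ^BV` (the Lean function
`transPrenex`, defined by structural recursion) is a many-one reduction from
satisfiability of closed prenex SO₂ formulas to satisfiability of closed
quantified bit-vector formulas: for every closed prenex SO₂ formula `φ`,
`φ` is satisfiable (its valuation is `1` under some interpretation) iff the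
closed quantified bit-vector formula `φ^BV` is satisfiable (its recursive
evaluation holds under some assignment). -/
theorem transPrenex_reduction {F : Type} {ar : F → ℕ} [DecidableEq F]
    (φ : SO2Prenex F ar) (hclosed : φ.ClosedIn ∅) :
    (∃ I : (f : F) → (Fin (ar f) → Bool) → Bool, φ.eval I = true) ↔
      (∃ σ : (f : F) → BitVec (2 ^ ar f), (transPrenex φ).Holds σ) := by
  have key : ∀ (I : (f : F) → (Fin (ar f) → Bool) → Bool)
      (σ : (f : F) → BitVec (2 ^ ar f)),
      (φ.eval I = true ↔ (transPrenex φ).Holds σ) := fun I σ =>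
    transPrenex_holds φ ∅ I σ hclosed (fun f hf => absurd hf (Set.notMem_empty f))
  constructor
  · rintro ⟨I, hI⟩
    exact ⟨fun _ => 0, (key I _).mp hI⟩
  · rintro ⟨σ, hσ⟩
    exact ⟨fun _ _ => false, (key _ σ).mpr hσ⟩
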